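/- Let z ∈ ℝ^n (n ≥ 3) be a nonzero vector such that for every triple of pairwise distinct indices i, j, k, z is orthogonal to at least one of e_i - e_j, e_j - e_k, e_i - e_k, and also orthogonal to at least one of e_i + e_j, e_j + e_k, e_i - e_k. Then z is a scalar multiple of either e_i for some i, or of ∑_{i∈S} e_i − ∑_{i∉S} e_i for some S ⊆ {1,…,n}. -/
import Mathlib

noncomputable def E {n : ℕ} (i : Fin n) : Fin n → ℝ := Pi.single i 1

def dot {n : ℕ} (x y : Fin n → ℝ) : ℝ := ∑ i, x i * y i

noncomputable def wS {n : ℕ} (S : Finset (Fin n)) : Fin n → ℝ :=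
  fun i => if i ∈ S then 1 else -1

lemma dot_single {n : ℕ} (z : Fin n → ℝ) (i : Fin n) : dot z (E i) = z i := by
  simp [dot, E, Pi.single_apply, mul_ite, Finset.sum_ite_eq']

lemma dot_sub' {n : ℕ} (z : Fin n → ℝ) (i j : Fin n) :
    dot z (E i - E j) = z i - z j := by
  simp only [dot, Pi.sub_apply, mul_sub, Finset.sum_sub_distrib]
  rw [← dot, ← dot, dot_single, dot_single]

lemma dot_add' {n : ℕ} (z : Fin n → ℝ) (i j : Fin n) :
    dot z (E i + E j) = z i + z j := by
  simp only [dot, Pi.add_apply, mul_add, Finset.sum_add_distrib]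
  rw [← dot, ← dot, dot_single, dot_single]

/-- If a nonzero `z` is orthogonal to at least one facet vector of each 3-belt of
`P_V(D_n)` (belts `(e_i-e_j, e_j-e_k, e_i-e_k)` and `(e_i+e_j, e_j+e_k, e_i-e_k)`),
then `z` is a scalar multiple of some `e_i` or of some `e(S) - e(S̄)`. -/
theorem belt_orthogonal_directions (n : ℕ) (hn : 3 ≤ n) (z : Fin n → ℝ)
    (hz : z ≠ 0)
    (ha : ∀ i j k : Fin n, i ≠ j → j ≠ k → i ≠ k →
      dot z (E i - E j) = 0 ∨ dot z (E j - E k) = 0 ∨ dot z (E i - E k) = 0)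
    (hb : ∀ i j k : Fin n, i ≠ j → j ≠ k → i ≠ k →
      dot z (E i + E j) = 0 ∨ dot z (E j + E k) = 0 ∨ dot z (E i - E k) = 0) :
    ∃ c : ℝ, (∃ i : Fin n, z = c • E i) ∨ (∃ S : Finset (Fin n), z = c • wS S) := by
  classical
  have ha' : ∀ i j k : Fin n, i ≠ j → j ≠ k → i ≠ k →
      z i = z j ∨ z j = z k ∨ z i = z k := by
    intro i j k h1 h2 h3
    have := ha i j k h1 h2 h3
    simpa [dot_sub', sub_eq_zero] using this
  have hb' : ∀ i j k : Fin n, i ≠ j → j ≠ k → i ≠ k →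
      z i = -z j ∨ z j = -z k ∨ z i = z k := by
    intro i j k h1 h2 h3
    have := hb i j k h1 h2 h3
    simpa [dot_sub', dot_add', sub_eq_zero, add_eq_zero_iff_eq_neg] using this
  by_cases hcase : ∀ i j : Fin n, z i = z j ∨ z i = -z j
  · obtain ⟨i0, hi0⟩ : ∃ i, z i ≠ 0 := Function.ne_iff.mp hz
    refine ⟨z i0, Or.inr ⟨Finset.univ.filter (fun i => z i = z i0), ?_⟩⟩
    funext i
    by_cases h : z i = z i0
    · simp [wS, h]
    · have hmem : i ∉ Finset.univ.filter (fun i => z i = z i0) := by simp [h]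
      have h2 : z i = -z i0 := (hcase i i0).resolve_left h
      simp [wS, hmem, h2]
  · push_neg at hcase
    obtain ⟨p, q, hpq1, hpq2⟩ := hcase
    have hne : p ≠ q := by rintro rfl; exact hpq1 rfl
    have key : ∀ r, r ≠ p → r ≠ q → z r = 0 := by
      intro r hrp hrq
      have hab : z r = z p ∨ z r = z q := by
        rcases ha' p q r hne (Ne.symm hrq) (Ne.symm hrp) with h | h | h
        · exact absurd h hpq1
        · exact Or.inr h.symm
        · exact Or.inl h.symm
      rcases hab with h | h
      · rcases hb' q p r hne.symm (Ne.symm hrp) (Ne.symm hrq) with h1 | h1 | h1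
        · exact absurd (by linarith : z p = -z q) hpq2
        · rw [h] at h1 ⊢; linarith
        · exact absurd (h1.trans h).symm hpq1
      · rcases hb' r q p hrq hne.symm hrp with h1 | h1 | h1
        · rw [h] at h1 ⊢; linarith
        · exact absurd (by rw [h1]; ring) hpq2
        · exact absurd (h1.symm.trans h) hpq1
    have hr : ∃ r : Fin n, r ≠ p ∧ r ≠ q := by
      by_contra h
      push_neg at h
      have hsub : (Finset.univ : Finset (Fin n)) ⊆ {p, q} := by
        intro r _
        rcases eq_or_ne r p with rfl | h'
        · simp
        · simp [h r h']
      have h1 := Finset.card_le_card hsub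
      have h2 : ({p, q} : Finset (Fin n)).card ≤ 2 :=
        (Finset.card_insert_le _ _).trans (by simp)
      simp [Finset.card_univ] at h1
      omega
    obtain ⟨r, hrp, hrq⟩ := hr
    have hr0 : z r = 0 := key r hrp hrq
    have hpq0 : z p = 0 ∨ z q = 0 := by
      rcases ha' p q r hne (Ne.symm hrq) (Ne.symm hrp) with h | h | h
      · exact absurd h hpq1
      · exact Or.inr (h.trans hr0)
      · exact Or.inl (h.trans hr0)
    rcases hpq0 with h0 | h0
    · refine ⟨z q, Or.inl ⟨q, ?_⟩⟩
      funext i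
      rcases eq_or_ne i q with rfl | hiq
      · simp [E]
      · rcases eq_or_ne i p with rfl | hip
        · simp [E, Pi.single_apply, hne.symm, h0]
        · simp [E, Pi.single_apply, hiq, key i hip hiq]
    · refine ⟨z p, Or.inl ⟨p, ?_⟩⟩
      funext i
      rcases eq_or_ne i p with rfl | hip
      · simp [E]
      · rcases eq_or_ne i q with rfl | hiq
        · simp [E, Pi.single_apply, hne, h0]
        · simp [E, Pi.single_apply, hip, key i hip hiq]
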